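/- arXiv:1303.1005 — 3 statements merged into one kernel-verified Lean document; each statement's English description precedes it below -/
import Mathlib

section
/- Let k be a nonreal field of characteristic ≠ 2 and let F_n = k((t_1,…,t_n)) be the Laurent series field in n ≥ 1 variables over k. Then s(F_n) = s(k) and p(F_n) = s(k) + 1 = p(F_n(t)), where F_n(t) is the rational function field in one variable over F_n. -/
noncomputable section

/-- `a` is a sum of `n` squares in the commutative ring `A`. -/
def SumOfSquares {A : Type*} [CommRing A] (n : ℕ) (a : A) : Prop :=
  ∃ x : Fin n → A, a = ∑ i, x i ^ 2

/-- The level `s(A)`: the least `n` such that `-1` is a sum of `n` squares (`⊤` if none). -/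
def levelE (A : Type*) [CommRing A] : ℕ∞ :=
  ⨅ (n : ℕ) (_ : SumOfSquares n (-1 : A)), (n : ℕ∞)

/-- The Pythagoras number `p(A)`: the least `n ≥ 1` such that every sum of squares in `A`
is a sum of `n` squares (`⊤` if none). -/
def pythagorasNumber (A : Type*) [CommRing A] : ℕ∞ :=
  ⨅ (n : ℕ) (_ : 1 ≤ n ∧ ∀ a : A, (∃ m, SumOfSquares m a) → SumOfSquares n a), (n : ℕ∞)

/-- A field is (formally) real if `-1` is not a sum of squares. -/
def IsRealField (K : Type*) [Field K] : Prop := ∀ n, ¬ SumOfSquares n (-1 : K)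

/-- The iterated power series ring `k[[t₁,…,t_n]] = k[[t₁,…,t_{n-1}]][[t_n]]`
(`IterPS k 0 = k`). -/
def IterPS (k : Type) : ℕ → Type
  | 0 => k
  | n + 1 => PowerSeries (IterPS k n)

instance IterPS.instCommRing (k : Type) [CommRing k] : ∀ n, CommRing (IterPS k n)
  | 0 => inferInstanceAs (CommRing k)
  | n + 1 =>
    letI := IterPS.instCommRing k n
    inferInstanceAs (CommRing (PowerSeries (IterPS k n)))

instance IterPS.instIsDomain (k : Type) [CommRing k] [IsDomain k] :
    ∀ n, IsDomain (IterPS k n)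
  | 0 => inferInstanceAs (IsDomain k)
  | n + 1 =>
    letI := IterPS.instIsDomain k n
    inferInstanceAs (IsDomain (PowerSeries (IterPS k n)))

/-! Every element `a` of a field of characteristic `≠ 2` equals
`((a + 1) / 2) ^ 2 - ((a - 1) / 2) ^ 2`, so `p ≤ s + 1`. For the converse, embed `Fₙ` into
`Frac(Rₙ₋₁)((tₙ))` and `Fₙ(t)` into `Fₙ((t))`. In a Hahn series field a sum of `m` squares either
has cancelling leading terms, which writes `-1` as a sum of `m - 1` squares of coefficients, or
has even order and leading coefficient a sum of `m` squares. Hence the level does not drop along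
these embeddings, and the uniformizer, of odd order, is not a sum of `s(k)` squares. -/

open scoped LaurentSeries

namespace SumOfSquares

variable {A B : Type*} [CommRing A] [CommRing B] {m n : ℕ} {a : A}

theorem mono (h : SumOfSquares m a) (hmn : m ≤ n) : SumOfSquares n a := by
  obtain ⟨k, rfl⟩ := Nat.exists_eq_add_of_le hmn
  obtain ⟨x, rfl⟩ := h
  exact ⟨Fin.append x 0, by simp [Fin.sum_univ_add]⟩

theorem map (f : A →+* B) (h : SumOfSquares n a) : SumOfSquares n (f a) := by
  obtain ⟨x, rfl⟩ := h
  exact ⟨f ∘ x, by simp⟩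

theorem map_neg_one (f : A →+* B) (h : SumOfSquares n (-1 : A)) : SumOfSquares n (-1 : B) := by
  simpa using h.map f

end SumOfSquares

theorem levelE_congr {A B : Type*} [CommRing A] [CommRing B]
    (h : ∀ n, SumOfSquares n (-1 : A) ↔ SumOfSquares n (-1 : B)) : levelE A = levelE B := by
  simp only [levelE, h]

section Field

variable {K : Type*} [Field K] {n : ℕ}

theorem sumOfSquares_neg_one_of_sum_sq_eq_zero {c : Fin (n + 1) → K} (h : ∑ i, c i ^ 2 = 0)
    {i₀ : Fin (n + 1)} (hi₀ : c i₀ ≠ 0) : SumOfSquares n (-1 : K) := by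
  refine ⟨fun j => c (i₀.succAbove j) / c i₀, ?_⟩
  rw [Fin.sum_univ_succAbove _ i₀] at h
  simp only [div_pow, ← Finset.sum_div]
  rw [eq_div_iff (pow_ne_zero 2 hi₀)]
  linear_combination -h

theorem sumOfSquares_succ_of_neg_one (h2 : (2 : K) ≠ 0) (hs : SumOfSquares n (-1 : K)) (a : K) :
    SumOfSquares (n + 1) a := by
  obtain ⟨c, hc⟩ := hs
  refine ⟨Fin.cons ((a + 1) / 2) fun i => c i * ((a - 1) / 2), ?_⟩
  simp only [Fin.sum_univ_succ, Fin.cons_zero, Fin.cons_succ, mul_pow, ← Finset.sum_mul, ← hc]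
  field_simp
  ring

theorem pythagorasNumber_eq_levelE_add_one (h2 : (2 : K) ≠ 0) (hK : ¬ IsRealField K) (t : K)
    (ht : ∀ m, SumOfSquares m t → SumOfSquares (m - 1) (-1 : K)) :
    pythagorasNumber K = levelE K + 1 := by
  classical
  have hex : ∃ s, SumOfSquares s (-1 : K) := by simpa [IsRealField] using hK
  have hlevel : levelE K = Nat.find hex :=
    le_antisymm (iInf₂_le (Nat.find hex) (Nat.find_spec hex))
      (le_iInf₂ fun m hm => by exact_mod_cast Nat.find_min' hex hm)
  have hsucc := sumOfSquares_succ_of_neg_one h2 (Nat.find_spec hex)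
  rw [hlevel]
  refine le_antisymm (iInf₂_le (Nat.find hex + 1) ⟨by omega, fun a _ => hsucc a⟩) (le_iInf₂ ?_)
  rintro m ⟨hm, hall⟩
  have := Nat.find_min' hex (ht m (hall t ⟨_, hsucc t⟩))
  exact_mod_cast (by omega : Nat.find hex + 1 ≤ m)

end Field

namespace HahnSeries

variable {Γ : Type*} [AddCommMonoid Γ] [LinearOrder Γ] [IsOrderedCancelAddMonoid Γ]

theorem coeff_mul_add_of_le_orderTop {R : Type*} [NonUnitalNonAssocSemiring R]
    {x y : HahnSeries Γ R} {v w : Γ} (hv : v ≤ x.orderTop) (hw : w ≤ y.orderTop) :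
    (x * y).coeff (v + w) = x.coeff v * y.coeff w := by
  rcases hv.lt_or_eq with hv | hv
  · rw [coeff_eq_zero_of_lt_orderTop hv, zero_mul]
    exact coeff_eq_zero_of_lt_orderTop <| (WithTop.coe_add v w ▸
      WithTop.add_lt_add_of_lt_of_le WithTop.coe_ne_top hv hw).trans_le orderTop_add_le_mul
  rcases hw.lt_or_eq with hw | hw
  · rw [coeff_eq_zero_of_lt_orderTop hw, mul_zero]
    exact coeff_eq_zero_of_lt_orderTop <| (WithTop.coe_add v w ▸
      WithTop.add_lt_add_of_le_of_lt WithTop.coe_ne_top hv.le hw).trans_le orderTop_add_le_mul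
  have hx : x ≠ 0 := by rintro rfl; simp at hv
  have hy : y ≠ 0 := by rintro rfl; simp at hw
  rw [← order_eq_orderTop_of_ne_zero hx, WithTop.coe_inj] at hv
  rw [← order_eq_orderTop_of_ne_zero hy, WithTop.coe_inj] at hw
  rw [hv, hw, coeff_mul_order_add_order, leadingCoeff_eq, leadingCoeff_eq]

variable {K : Type*} [Field K] {m : ℕ}

theorem sumOfSquares_neg_one_or_exists_orderTop_eq {y : HahnSeries Γ K}
    (hy : SumOfSquares m y) (hy₀ : y ≠ 0) :
    SumOfSquares (m - 1) (-1 : K) ∨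
      ∃ v, y.orderTop = (v + v : Γ) ∧ SumOfSquares m (y.coeff (v + v)) := by
  obtain ⟨x, rfl⟩ := hy
  cases m with
  | zero => simp at hy₀
  | succ m =>
  obtain ⟨i₀, -, hi₀⟩ := Finset.univ.exists_min_image (fun i => (x i).orderTop) Finset.univ_nonempty
  have hx₀ : x i₀ ≠ 0 := by
    rintro h
    refine hy₀ (Finset.sum_eq_zero fun i hi => ?_)
    simpa [h] using hi₀ i hi
  set v := (x i₀).order
  have hv : ∀ i, (v : WithTop Γ) ≤ (x i).orderTop := fun i =>
    (order_eq_orderTop_of_ne_zero hx₀).trans_le (hi₀ i (Finset.mem_univ i))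
  have hlow : ((v + v : Γ) : WithTop Γ) ≤ (∑ i, x i ^ 2).orderTop := by
    refine le_orderTop_iff_forall.2 fun g hg => ?_
    rw [coeff_sum]
    refine Finset.sum_eq_zero fun i _ => coeff_eq_zero_of_lt_orderTop ?_
    rw [WithTop.coe_add] at hg
    exact hg.trans_le ((add_le_add (hv i) (hv i)).trans (pow_two (x i) ▸ orderTop_add_le_mul))
  have hcoeff : (∑ i, x i ^ 2).coeff (v + v) = ∑ i, (x i).coeff v ^ 2 := by
    simp only [coeff_sum, pow_two, coeff_mul_add_of_le_orderTop (hv _) (hv _)]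
  by_cases h₀ : ∑ i, (x i).coeff v ^ 2 = 0
  · exact .inl (sumOfSquares_neg_one_of_sum_sq_eq_zero h₀ (coeff_order_eq_zero.not.2 hx₀))
  · exact .inr ⟨v, le_antisymm (orderTop_le_of_coeff_ne_zero (hcoeff ▸ h₀)) hlow,
      hcoeff ▸ ⟨_, rfl⟩⟩

theorem sumOfSquares_of_sumOfSquares_single {g : Γ} {r : K} (hr : r ≠ 0)
    (h : SumOfSquares m (single g r)) :
    SumOfSquares (m - 1) (-1 : K) ∨ Even g ∧ SumOfSquares m r := by
  refine (sumOfSquares_neg_one_or_exists_orderTop_eq h (single_ne_zero hr)).imp_right ?_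
  rintro ⟨v, hv, hsq⟩
  rw [orderTop_single hr, WithTop.coe_inj] at hv
  exact ⟨⟨v, hv⟩, by rwa [← hv, coeff_single_same] at hsq⟩

theorem sumOfSquares_neg_one (h : SumOfSquares m (-1 : HahnSeries Γ K)) :
    SumOfSquares m (-1 : K) := by
  rw [show (-1 : HahnSeries Γ K) = single 0 (-1) by simp [← C_apply]] at h
  rcases sumOfSquares_of_sumOfSquares_single (neg_ne_zero.2 one_ne_zero) h with h | ⟨-, h⟩
  exacts [h.mono (Nat.sub_le m 1), h]

theorem sumOfSquares_neg_one_of_sumOfSquares_single_one {g : Γ} (hg : ¬ Even g)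
    (h : SumOfSquares m (single g (1 : K))) : SumOfSquares (m - 1) (-1 : K) :=
  (sumOfSquares_of_sumOfSquares_single one_ne_zero h).resolve_right fun h => hg h.1

end HahnSeries

def PowerSeries.fractionRingToLaurentSeries (R : Type*) [CommRing R] [IsDomain R] :
    FractionRing (PowerSeries R) →+* (FractionRing R)⸨X⸩ :=
  IsFractionRing.lift (g := (HahnSeries.ofPowerSeries ℤ _).comp (PowerSeries.map (algebraMap R _)))
    (by
      rw [RingHom.coe_comp]
      exact HahnSeries.ofPowerSeries_injective.comp
        (PowerSeries.map_injective _ (IsFractionRing.injective R (FractionRing R))))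

theorem PowerSeries.fractionRingToLaurentSeries_X (R : Type*) [CommRing R] [IsDomain R] :
    fractionRingToLaurentSeries R (algebraMap _ _ (X : PowerSeries R)) = HahnSeries.single 1 1 := by
  simp [fractionRingToLaurentSeries]

theorem PowerSeries.sumOfSquares_neg_one_of_sumOfSquares_X {R : Type*} [CommRing R] [IsDomain R]
    {m : ℕ} (h : SumOfSquares m (algebraMap (PowerSeries R) (FractionRing (PowerSeries R)) X)) :
    SumOfSquares (m - 1) (-1 : FractionRing R) := by
  have := h.map (fractionRingToLaurentSeries R)
  rw [fractionRingToLaurentSeries_X] at this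
  exact HahnSeries.sumOfSquares_neg_one_of_sumOfSquares_single_one Int.not_even_one this

open scoped RatFunc in
theorem RatFunc.sumOfSquares_neg_one {F : Type*} [Field F] {m : ℕ}
    (h : SumOfSquares m (-1 : RatFunc F)) : SumOfSquares m (-1 : F) :=
  HahnSeries.sumOfSquares_neg_one (h.map_neg_one (algebraMap (RatFunc F) F⸨X⸩))

open scoped RatFunc in
theorem RatFunc.sumOfSquares_neg_one_of_sumOfSquares_X {F : Type*} [Field F] {m : ℕ}
    (h : SumOfSquares m (X : RatFunc F)) : SumOfSquares (m - 1) (-1 : F) := by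
  have := h.map (algebraMap (RatFunc F) F⸨X⸩)
  rw [coe_X] at this
  exact HahnSeries.sumOfSquares_neg_one_of_sumOfSquares_single_one Int.not_even_one this

def IterPS.C (k : Type) [CommRing k] : ∀ n, k →+* IterPS k n
  | 0 => RingHom.id k
  | n + 1 => PowerSeries.C.comp (IterPS.C k n)

theorem IterPS.sumOfSquares_neg_one_of_fractionRing {k : Type} [Field k] :
    ∀ {n m : ℕ}, SumOfSquares m (-1 : FractionRing (IterPS k n)) → SumOfSquares m (-1 : k)
  | 0, _, h => h.map_neg_one (IsFractionRing.lift (A := IterPS k 0)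
      (g := (RingHom.id k : IterPS k 0 →+* k)) Function.injective_id)
  | n + 1, _, h => sumOfSquares_neg_one_of_fractionRing (HahnSeries.sumOfSquares_neg_one
      (h.map_neg_one (PowerSeries.fractionRingToLaurentSeries (IterPS k n))))

/-- Let `k` be a nonreal field of characteristic ≠ 2 and
`Fₙ = k((t₁,…,t_n))` the Laurent series field in `n ≥ 1` variables over `k`.
Then `s(Fₙ) = s(k)` and `p(Fₙ) = s(k) + 1 = p(Fₙ(t))`. -/
theorem stmt_0 (k : Type) [Field k] (h2 : (2 : k) ≠ 0) (hk : ¬ IsRealField k)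
    (n : ℕ) (hn : 1 ≤ n) :
    levelE (FractionRing (IterPS k n)) = levelE k ∧
    pythagorasNumber (FractionRing (IterPS k n)) = levelE k + 1 ∧
    pythagorasNumber (RatFunc (FractionRing (IterPS k n))) = levelE k + 1 := by
  obtain ⟨p, rfl⟩ := Nat.exists_eq_add_of_le' hn
  set F := FractionRing (IterPS k (p + 1))
  let ι : k →+* F := (algebraMap _ F).comp (IterPS.C k (p + 1))
  have hlevF (m : ℕ) : SumOfSquares m (-1 : F) ↔ SumOfSquares m (-1 : k) :=
    ⟨IterPS.sumOfSquares_neg_one_of_fractionRing, (·.map_neg_one ι)⟩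
  have hlevR (m : ℕ) : SumOfSquares m (-1 : RatFunc F) ↔ SumOfSquares m (-1 : F) :=
    ⟨RatFunc.sumOfSquares_neg_one, (·.map_neg_one (algebraMap F (RatFunc F)))⟩
  have h2F : (2 : F) ≠ 0 := by simpa only [map_ofNat] using (map_ne_zero ι).2 h2
  have h2R : (2 : RatFunc F) ≠ 0 := by
    simpa only [map_ofNat] using (map_ne_zero (algebraMap F (RatFunc F))).2 h2F
  have hF : ¬ IsRealField F := fun hF => hk fun m hm => hF m ((hlevF m).2 hm)
  have hR : ¬ IsRealField (RatFunc F) := fun hR => hF fun m hm => hR m ((hlevR m).2 hm)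
  refine ⟨levelE_congr hlevF, ?_, ?_⟩
  · rw [← levelE_congr hlevF]
    exact pythagorasNumber_eq_levelE_add_one h2F hF _ fun m hm => (hlevF _).2
      (IterPS.sumOfSquares_neg_one_of_fractionRing
        (PowerSeries.sumOfSquares_neg_one_of_sumOfSquares_X hm))
  · rw [← levelE_congr hlevF, ← levelE_congr hlevR]
    exact pythagorasNumber_eq_levelE_add_one h2R hR _ fun m hm => (hlevR _).2
      (RatFunc.sumOfSquares_neg_one_of_sumOfSquares_X hm)

end
end

section
/- Let k be a field of characteristic ≠ 2 and consider the rings B := k[[t]][x] ⊆ A := k[x][[t]]. Then every element f ∈ A admits a factorization f = u·g, where u is a unit of A and g ∈ B. -/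
/-!
Factor out the `t`-adic order of `f` and scale by a constant, so that the constant term
`p = f(0) ∈ k[x]` is monic. Then solve `u * g = f` one `t`-coefficient at a time with
`u₀ = 1`, `g₀ = p`: the part `r_j` of `f_j` not yet accounted for by the lower coefficients
is divided by `p`, the quotient becoming `u_j` and the remainder `g_j`. Hence `u` is a unit and
every coefficient of `g` has `x`-degree at most `deg p`, so `g` is a polynomial in `x`.
-/

noncomputable section

/-- The natural inclusion `B = k[[t]][x] ⊆ A = k[x][[t]]`, sending a power series
coefficient `c(t)` to itself and the variable `x` to `x`. -/
def polyPS (k : Type) [CommRing k] :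
    Polynomial (PowerSeries k) →+* PowerSeries (Polynomial k) :=
  Polynomial.eval₂RingHom (PowerSeries.map Polynomial.C)
    (PowerSeries.C (R := Polynomial k) Polynomial.X)

open Polynomial

section Preparation

variable {R : Type} [CommRing R] (f : PowerSeries R[X])

local notation "p" => PowerSeries.constantCoeff f

-- `r_j = f_j - ∑_{0<m<j} u_m g_{j-m}`, where `u_m = r_m /ₘ p` and `g_m = r_m %ₘ p`.
def prepRem : ℕ → R[X]
  | 0 => 0
  | j + 1 => PowerSeries.coeff (j + 1) f -
      ∑ i : Fin j, (prepRem (i + 1) /ₘ p) * (prepRem (j - i) %ₘ p)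

def prepUnit : PowerSeries R[X] :=
  PowerSeries.mk fun j => if j = 0 then 1 else prepRem f j /ₘ p

def prepFactor : PowerSeries R[X] :=
  PowerSeries.mk fun j => if j = 0 then p else prepRem f j %ₘ p

theorem prepRem_succ (j : ℕ) :
    prepRem f (j + 1) = PowerSeries.coeff (j + 1) f -
      ∑ i ∈ Finset.range j, (prepRem f (i + 1) /ₘ p) * (prepRem f (j - i) %ₘ p) := by
  rw [prepRem,
    Fin.sum_univ_eq_sum_range fun i => (prepRem f (i + 1) /ₘ p) * (prepRem f (j - i) %ₘ p)]

theorem constantCoeff_prepUnit : PowerSeries.constantCoeff (prepUnit f) = 1 := by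
  rw [prepUnit, ← PowerSeries.coeff_zero_eq_constantCoeff_apply, PowerSeries.coeff_mk, if_pos rfl]

theorem natDegree_coeff_prepFactor_le (hf : Monic p) (n : ℕ) :
    (PowerSeries.coeff n (prepFactor f)).natDegree ≤ natDegree p := by
  rw [prepFactor, PowerSeries.coeff_mk]
  split_ifs
  · exact le_rfl
  · exact natDegree_modByMonic_le _ hf

theorem prepUnit_mul_prepFactor : prepUnit f * prepFactor f = f := by
  refine PowerSeries.ext fun n => ?_
  rw [PowerSeries.coeff_mul, Finset.Nat.sum_antidiagonal_eq_sum_range_succ_mk]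
  simp only [prepUnit, prepFactor, PowerSeries.coeff_mk]
  cases n with
  | zero => simp
  | succ j =>
    have middle : ∑ i ∈ Finset.range j, (if i + 1 = 0 then 1 else prepRem f (i + 1) /ₘ p) *
        (if j + 1 - (i + 1) = 0 then p else prepRem f (j + 1 - (i + 1)) %ₘ p) =
        ∑ i ∈ Finset.range j, (prepRem f (i + 1) /ₘ p) * (prepRem f (j - i) %ₘ p) := by
      refine Finset.sum_congr rfl fun i hi => ?_
      have : j - i ≠ 0 := Nat.sub_ne_zero_of_lt (Finset.mem_range.mp hi)
      simp [this]
    rw [Finset.sum_range_succ, Finset.sum_range_succ', middle]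
    simp only [if_pos, Nat.add_one_ne_zero, if_false, Nat.sub_self, Nat.sub_zero, one_mul]
    linear_combination prepRem_succ f j + modByMonic_add_div (prepRem f (j + 1)) p

end Preparation

section PolyPS

variable {R : Type} [CommRing R]

theorem polyPS_C_X : polyPS R (C PowerSeries.X) = PowerSeries.X := by
  simp [polyPS]

theorem coeff_polyPS_C_mul_X_pow (a : PowerSeries R) (i n : ℕ) :
    PowerSeries.coeff n (polyPS R (C a * X ^ i)) = C (PowerSeries.coeff n a) * X ^ i := by
  simp [polyPS, ← map_pow, PowerSeries.coeff_mul_C]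

theorem exists_polyPS_eq_of_natDegree_coeff_le {G : PowerSeries R[X]}
    {d : ℕ} (hG : ∀ n, (PowerSeries.coeff n G).natDegree ≤ d) : ∃ g, polyPS R g = G := by
  refine ⟨∑ i ∈ Finset.range (d + 1),
    C (PowerSeries.mk fun n => (PowerSeries.coeff n G).coeff i) * X ^ i, ?_⟩
  refine PowerSeries.ext fun n => ?_
  simp only [map_sum, coeff_polyPS_C_mul_X_pow, PowerSeries.coeff_mk]
  simp only [C_mul_X_pow_eq_monomial]
  exact ((PowerSeries.coeff n G).as_sum_range' (d + 1) (Nat.lt_succ_of_le (hG n))).symm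

theorem exists_unit_mul_polyPS_of_monic (f : PowerSeries R[X])
    (hf : (PowerSeries.constantCoeff f).Monic) :
    ∃ (u : (PowerSeries R[X])ˣ) (g : (PowerSeries R)[X]), f = u * polyPS R g := by
  have hu : IsUnit (prepUnit f) := by
    rw [PowerSeries.isUnit_iff_constantCoeff, constantCoeff_prepUnit]
    exact isUnit_one
  obtain ⟨g, hg⟩ := exists_polyPS_eq_of_natDegree_coeff_le (natDegree_coeff_prepFactor_le f hf)
  exact ⟨hu.unit, g, by rw [hu.unit_spec, hg, prepUnit_mul_prepFactor]⟩

end PolyPS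

theorem exists_unit_mul_polyPS_of_constantCoeff_ne_zero {k : Type} [Field k]
    {f : PowerSeries k[X]} (hf : PowerSeries.constantCoeff f ≠ 0) :
    ∃ (u : (PowerSeries k[X])ˣ) (g : (PowerSeries k)[X]), f = u * polyPS k g := by
  set c := (PowerSeries.constantCoeff f).leadingCoeff
  have hc : IsUnit (PowerSeries.C (C c)) :=
    ((isUnit_C).mpr (leadingCoeff_ne_zero.mpr hf).isUnit).map PowerSeries.C
  obtain ⟨u, g, hug⟩ := exists_unit_mul_polyPS_of_monic (PowerSeries.C (C c⁻¹) * f) (by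
    rw [map_mul, PowerSeries.constantCoeff_C, mul_comm]
    exact monic_mul_leadingCoeff_inv hf)
  refine ⟨hc.unit * u, g, ?_⟩
  rw [Units.val_mul, hc.unit_spec, mul_assoc, ← hug, ← mul_assoc, ← map_mul, ← C_mul,
    mul_inv_cancel₀ (leadingCoeff_ne_zero.mpr hf), C_1, map_one, one_mul]

theorem stmt_8_general (k : Type) [Field k]
    (f : PowerSeries (Polynomial k)) :
    ∃ (u : (PowerSeries (Polynomial k))ˣ) (g : Polynomial (PowerSeries k)),
      f = u * polyPS k g := by
  rcases eq_or_ne f 0 with rfl | hf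
  · exact ⟨1, 0, by simp⟩
  obtain ⟨u, g, hug⟩ := exists_unit_mul_polyPS_of_constantCoeff_ne_zero
    (PowerSeries.constantCoeff_divXPowOrder_eq_zero_iff.not.mpr hf)
  refine ⟨u, C PowerSeries.X ^ f.order.toNat * g, ?_⟩
  rw [map_mul, map_pow, polyPS_C_X, mul_left_comm, ← hug, PowerSeries.X_pow_order_mul_divXPowOrder]

/-- For any field `k` of characteristic ≠ 2 and the natural inclusion
`B = k[[t]][x] ⊆ A = k[x][[t]]`, every `f ∈ A` factors as `f = u·g` with `u ∈ Aˣ`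
and `g ∈ B`. -/
theorem stmt_8 (k : Type) [Field k] (h2 : (2 : k) ≠ 0)
    (f : PowerSeries (Polynomial k)) :
    ∃ (u : (PowerSeries (Polynomial k))ˣ) (g : Polynomial (PowerSeries k)),
      f = u * polyPS k g :=
  stmt_8_general k f
end
end

section
/- Let k be a field of characteristic ≠ 2, R_n = k[[t_1,…,t_n]], and let f ∈ R_n be a power series regular in t_n (i.e. f(0,…,0,t_n) ≠ 0 in k[[t_n]]). Let m ≥ 1 be an integer with m ≤ s(k). If f is a sum of m squares in R_n, then there exist a ∈ R_n and b ∈ R_{n−1}[t_n] such that b is a sum of m squares of elements of R_{n−1}[t_n] and f = a²·b. -/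
noncomputable section

/-- The natural inclusion `k[[t₁,…,t_n]][t_{n+1}] ⊆ k[[t₁,…,t_{n+1}]]`. -/
def polyToPS (k : Type) [CommRing k] (n : ℕ) :
    Polynomial (IterPS k n) →+* IterPS k (n + 1) :=
  Polynomial.coeToPowerSeries.ringHom

/-- Evaluation of an iterated power series at `t₁ = ⋯ = t_n = 0`. -/
def IterPS.evalZero (k : Type) [CommRing k] : ∀ n, IterPS k n →+* k
  | 0 => RingHom.id k
  | n + 1 =>
    (IterPS.evalZero k n).comp
      ((PowerSeries.constantCoeff (R := IterPS k n)) :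
        PowerSeries (IterPS k n) →+* IterPS k n)

/-!
Write `f = ∑ gᵢ²` and reduce modulo the maximal ideal of `R_{n-1}`. Since `m ≤ s(k)`, a sum of
`m` squares in `k` vanishes only if every term does; so if `e` is the least order of the reduced
`gᵢ`, the reduction of `f` has order exactly `2e`, with leading coefficient `∑ cᵢ²` where `cᵢ` is
the `e`-th coefficient of `gᵢ`. Since `R_{n-1}` is complete, Weierstrass division by `f` gives
polynomials `rᵢ ≡ gᵢ` modulo `f` whose reductions agree with those of the `gᵢ` up to degree `e`
(when `e = 0`, `f` is a unit and `rᵢ` is the constant term of `gᵢ`). Then `∑ rᵢ² = f c`, and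
comparing the coefficients of `t^{2e}` after reduction gives `c ≡ 1` modulo the maximal ideal, so
`c` is the square of a unit `s` by Hensel's lemma and `f = (s⁻¹)² ∑ rᵢ²`.
-/

open PowerSeries
open scoped Polynomial

theorem exists_sq_eq_of_one_sub_mem {A : Type*} [CommRing A] {I : Ideal A} [HenselianRing A I]
    (h2 : IsUnit (2 : A)) {u : A} (hu : 1 - u ∈ I) : ∃ s, s ^ 2 = u := by
  obtain ⟨s, hs, -⟩ := HenselianRing.is_henselian (Polynomial.X ^ 2 - Polynomial.C u)
    (Polynomial.monic_X_pow_sub_C u two_ne_zero) 1 (by simpa using hu)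
    (by simpa [Polynomial.derivative_X_pow, one_add_one_eq_two] using
      h2.map (Ideal.Quotient.mk I))
  exact ⟨s, by simpa [sub_eq_zero] using hs⟩

theorem eq_zero_of_sum_sq_eq_zero_of_le_levelE {K : Type*} [Field K] {m : ℕ}
    (hm : (m : ℕ∞) ≤ levelE K) {c : Fin m → K} (hc : ∑ i, c i ^ 2 = 0) : c = 0 := by
  by_contra! hne
  obtain ⟨i₀, hi₀⟩ := Function.ne_iff.mp hne
  obtain ⟨m, rfl⟩ := Nat.exists_eq_succ_of_ne_zero (Fin.pos i₀).ne'
  have hsos : SumOfSquares m (-1 : K) := by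
    refine ⟨fun i => c (i₀.succAbove i) / c i₀, ?_⟩
    rw [Fin.sum_univ_succAbove _ i₀] at hc
    rw [Finset.sum_congr rfl fun i _ => div_pow _ _ 2, ← Finset.sum_div,
      eq_div_iff (pow_ne_zero 2 (hi₀ : c i₀ ≠ 0))]
    linear_combination -hc
  have : ((m + 1 : ℕ) : ℕ∞) ≤ m := hm.trans (iInf₂_le m hsos)
  norm_cast at this
  omega

theorem smodEq_pow_smul_top_iff {S : Type*} [CommRing S] {J : Ideal S} {n : ℕ} {x y : S} :
    x ≡ y [SMOD (J ^ n • ⊤ : Submodule S S)] ↔ x - y ∈ J ^ n := by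
  rw [SModEq.sub_mem, smul_eq_mul, Ideal.mul_top]

theorem dvd_sum_sq_of_dvd_sub {R : Type*} [CommRing R] {ι : Type*} [Fintype ι] {g r : ι → R}
    (h : ∀ i, ∑ j, g j ^ 2 ∣ g i - r i) : ∑ j, g j ^ 2 ∣ ∑ i, r i ^ 2 := by
  have : ∑ i, r i ^ 2 = ∑ j, g j ^ 2 - ∑ i, (g i - r i) * (g i + r i) := by
    rw [← Finset.sum_sub_distrib]
    exact Finset.sum_congr rfl fun i _ => by ring
  rw [this]
  exact dvd_sub dvd_rfl (Finset.dvd_sum fun i _ => dvd_mul_of_dvd_left (h i) _)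

namespace PowerSeries

variable {A : Type*} [CommRing A] {I : Ideal A}

theorem coeff_mul_mem_pow_sub {s t : ℕ} {f g : A⟦X⟧} (hf : ∀ i, coeff i f ∈ I ^ (s - i))
    (hg : ∀ i, coeff i g ∈ I ^ (t - i)) (i : ℕ) : coeff i (f * g) ∈ I ^ (s + t - i) := by
  rw [coeff_mul]
  refine Ideal.sum_mem _ fun p hp => ?_
  rw [Finset.HasAntidiagonal.mem_antidiagonal] at hp
  exact Ideal.pow_le_pow_right (by omega) (pow_add I _ _ ▸ Ideal.mul_mem_mul (hf p.1) (hg p.2))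

-- Truncated subtraction is intended: coefficients of index `≥ s` are unconstrained.
theorem mem_comap_constantCoeff_pow_iff {s : ℕ} {f : A⟦X⟧} :
    f ∈ I.comap (constantCoeff (R := A)) ^ s ↔ ∀ i, coeff i f ∈ I ^ (s - i) := by
  constructor
  · intro hf
    induction s generalizing f with
    | zero => simp
    | succ s ih =>
      rw [pow_succ] at hf
      refine Submodule.mul_induction_on hf (fun a ha b hb => ?_) fun x y hx hy i => ?_
      · refine coeff_mul_mem_pow_sub (t := 1) (ih ha) fun j => ?_
        rcases j with _ | j
        · simpa using hb
        · simp
      · rw [map_add]; exact add_mem (hx i) (hy i)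
  · intro hf
    rw [eq_X_pow_mul_shift_add_trunc s f, ← Polynomial.eval₂_C_X_eq_coe,
      eval₂_trunc_eq_sum_range]
    refine add_mem (Ideal.mul_mem_right _ _ (Ideal.pow_mem_pow (by simp) s))
      (Ideal.sum_mem _ fun i hi => ?_)
    rw [Finset.mem_range] at hi
    rw [show s = (s - i) + i by omega, pow_add]
    refine Ideal.mul_mem_mul ?_ (Ideal.pow_mem_pow (by simp) i)
    have hC : I.map (C (R := A)) ≤ I.comap constantCoeff :=
      Ideal.map_le_iff_le_comap.mpr fun a ha => by simpa using ha
    exact Ideal.pow_right_mono hC _ (Ideal.map_pow C I _ ▸ Ideal.mem_map_of_mem C (hf i))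

theorem isAdicComplete_comap_constantCoeff [IsAdicComplete I A] :
    IsAdicComplete (I.comap (constantCoeff (R := A))) A⟦X⟧ := by
  refine { haus' := fun f hf => ?_, prec' := fun f hf => ?_ }
  · ext i
    refine IsHausdorff.haus' (I := I) _ fun n => smodEq_pow_smul_top_iff.mpr ?_
    simpa using mem_comap_constantCoeff_pow_iff.mp (smodEq_pow_smul_top_iff.mp (hf (n + i))) i
  · have hcoeff (i : ℕ) :
        ∃ L, ∀ n, coeff i (f (n + i)) ≡ L [SMOD (I ^ n • ⊤ : Submodule A A)] :=
      IsPrecomplete.prec inferInstance fun {a b} hab => smodEq_pow_smul_top_iff.mpr <| by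
        simpa using mem_comap_constantCoeff_pow_iff.mp
          (smodEq_pow_smul_top_iff.mp (hf (by omega : a + i ≤ b + i))) i
    choose L hL using hcoeff
    refine ⟨mk L, fun n => smodEq_pow_smul_top_iff.mpr (mem_comap_constantCoeff_pow_iff.mpr
      fun i => ?_)⟩
    rcases le_or_gt i n with hi | hi
    · obtain ⟨d, rfl⟩ := Nat.exists_eq_add_of_le' hi
      simpa using smodEq_pow_smul_top_iff.mp (hL i d)
    · simp [Nat.sub_eq_zero_of_le hi.le]

theorem exists_dvd_sub_coe [IsAdicComplete I A] (hI : I ≠ ⊤) {F : A⟦X⟧} {d : ℕ}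
    (hlow : ∀ j < d, coeff j F ∈ I) (hd : IsUnit (coeff d F)) (G : A⟦X⟧) :
    ∃ r : A[X], F ∣ G - r ∧ ∀ j < d, coeff j (G - r : A⟦X⟧) ∈ I := by
  have hord : (F.map (Ideal.Quotient.mk I)).order = d := by
    refine order_eq_nat.mpr ⟨?_, fun j hj => ?_⟩
    · simpa [Ideal.Quotient.eq_zero_iff_mem] using
        fun h => hI (Ideal.eq_top_of_isUnit_mem _ h hd)
    · simpa [Ideal.Quotient.eq_zero_iff_mem] using hlow j hj
  have H : F.IsWeierstrassDivisorAt I := by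
    rwa [IsWeierstrassDivisorAt, hord, ENat.toNat_natCast]
  have hdiv := H.isWeierstrassDivisionAt_div_mod G
  refine ⟨H.mod G, ⟨H.div G, sub_eq_iff_eq_add.mpr hdiv.eq_mul_add⟩, fun j hj => ?_⟩
  exact hdiv.coeff_f_sub_r_mem (by rwa [hord, ENat.toNat_natCast])

theorem coeff_two_mul_sum_sq {ι : Type*} [Fintype ι] {e : ℕ} {g : ι → A⟦X⟧}
    (hg : ∀ i, X ^ e ∣ g i) : coeff (2 * e) (∑ i, g i ^ 2) = ∑ i, coeff e (g i) ^ 2 := by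
  choose h hh using hg
  simp [hh, mul_pow, ← pow_mul, mul_comm e 2, coeff_X_pow_mul', coeff_zero_eq_constantCoeff]

theorem X_pow_two_mul_dvd_sum_sq {ι : Type*} [Fintype ι] {e : ℕ} {g : ι → A⟦X⟧}
    (hg : ∀ i, X ^ e ∣ g i) : X ^ (2 * e) ∣ ∑ i, g i ^ 2 :=
  Finset.dvd_sum fun i _ => by simpa [← pow_mul, mul_comm e 2] using pow_dvd_pow_of_dvd (hg i) 2

theorem exists_X_pow_dvd_and_sum_sq_coeff_ne_zero {K : Type*} [Field K] {m : ℕ}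
    (hm : (m : ℕ∞) ≤ levelE K) {g : Fin m → K⟦X⟧} (hg : ∑ i, g i ^ 2 ≠ 0) :
    ∃ e, (∀ i, X ^ e ∣ g i) ∧ ∑ i, coeff e (g i) ^ 2 ≠ 0 := by
  classical
  have hex : ∃ e, ∃ i, coeff e (g i) ≠ 0 := by
    by_contra! h
    exact hg (by simp [show ∀ i, g i = 0 from fun i => ext (h · i)])
  refine ⟨Nat.find hex, fun i => X_pow_dvd_iff.mpr fun j hj => ?_, fun h0 => ?_⟩
  · by_contra hne
    exact Nat.find_min hex hj ⟨i, hne⟩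
  · obtain ⟨i, hi⟩ := Nat.find_spec hex
    exact hi (congrFun (eq_zero_of_sum_sq_eq_zero_of_le_levelE hm h0) i)

theorem constantCoeff_eq_one_of_sum_sq_eq_mul {K : Type*} [CommRing K] [IsDomain K]
    {ι : Type*} [Fintype ι] {e : ℕ} {g r : ι → K⟦X⟧} {c : K⟦X⟧} (hg : ∀ i, X ^ e ∣ g i)
    (hgr : ∀ i, X ^ (e + 1) ∣ g i - r i) (hlead : ∑ i, coeff e (g i) ^ 2 ≠ 0)
    (hc : ∑ i, r i ^ 2 = (∑ i, g i ^ 2) * c) : constantCoeff c = 1 := by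
  have hcoeff (i : ι) : coeff e (r i) = coeff e (g i) := by
    have := X_pow_dvd_iff.mp (hgr i) e e.lt_succ_self
    rwa [map_sub, sub_eq_zero, eq_comm] at this
  have hr (i : ι) : X ^ e ∣ r i := by
    simpa using dvd_sub (hg i) ((pow_dvd_pow X e.le_succ).trans (hgr i))
  obtain ⟨q, hq⟩ := X_pow_two_mul_dvd_sum_sq hg
  have hq0 : constantCoeff q = ∑ i, coeff e (g i) ^ 2 := by
    simpa [hq, coeff_X_pow_mul', coeff_zero_eq_constantCoeff] using coeff_two_mul_sum_sq hg
  have key := congrArg (coeff (2 * e)) hc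
  rw [coeff_two_mul_sum_sq hr, hq, mul_assoc, coeff_X_pow_mul'] at key
  simp only [le_refl, if_true, Nat.sub_self, coeff_zero_eq_constantCoeff, map_mul, hcoeff,
    ← hq0] at key
  exact (mul_eq_left₀ (hq0 ▸ hlead)).mp key.symm

variable {K : Type*} [Field K] (π : A →+* K) [IsAdicComplete (RingHom.ker π) A]

theorem exists_dvd_sub_coe_of_map (hπ : ∀ a, π a ≠ 0 → IsUnit a) {F : A⟦X⟧} {d : ℕ}
    (hlow : X ^ d ∣ F.map π) (hd : coeff d (F.map π) ≠ 0) (G : A⟦X⟧) :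
    ∃ r : A[X], F ∣ G - r ∧ X ^ max d 1 ∣ (G - r : A⟦X⟧).map π := by
  rcases Nat.eq_zero_or_pos d with rfl | hd0
  · have hF : IsUnit F :=
      isUnit_iff_constantCoeff.mpr (hπ _ (by simpa [coeff_zero_eq_constantCoeff] using hd))
    refine ⟨Polynomial.C (constantCoeff G), hF.dvd, ?_⟩
    simp [X_dvd_iff, ← coeff_zero_eq_constantCoeff, coeff_map]
  · obtain ⟨r, hr, hcoeff⟩ := exists_dvd_sub_coe (RingHom.ker_ne_top π) (d := d)
      (fun j hj => by simpa using X_pow_dvd_iff.mp hlow j hj) (hπ _ (by simpa using hd)) G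
    refine ⟨r, hr, X_pow_dvd_iff.mpr fun j hj => ?_⟩
    simpa using hcoeff j (by omega)

theorem exists_eq_sq_mul_sum_sq_coe (hπ : ∀ a, π a ≠ 0 → IsUnit a) (h2 : (2 : K) ≠ 0) {m : ℕ}
    (hm : (m : ℕ∞) ≤ levelE K) (g : Fin m → A⟦X⟧) (hreg : (∑ i, g i ^ 2).map π ≠ 0) :
    ∃ (a : A⟦X⟧) (r : Fin m → A[X]), ∑ i, g i ^ 2 = a ^ 2 * ∑ i, (r i : A⟦X⟧) ^ 2 := by
  have hmap : (∑ i, g i ^ 2).map π = ∑ i, (g i).map π ^ 2 := by simp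
  obtain ⟨e, hg, hlead⟩ := exists_X_pow_dvd_and_sum_sq_coeff_ne_zero hm (hmap ▸ hreg)
  choose r hr hgr using fun i => exists_dvd_sub_coe_of_map π hπ
    (hmap ▸ X_pow_two_mul_dvd_sum_sq hg) (by rwa [hmap, coeff_two_mul_sum_sq hg]) (g i)
  obtain ⟨c, hc⟩ := dvd_sum_sq_of_dvd_sub hr
  have hc1 : π (constantCoeff c) = 1 := by
    rw [← coeff_zero_eq_constantCoeff_apply, ← coeff_map, coeff_zero_eq_constantCoeff]
    refine constantCoeff_eq_one_of_sum_sq_eq_mul hg (r := fun i => (r i : A⟦X⟧).map π)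
      (fun i => ?_) hlead (by simpa using congrArg (map π) hc)
    exact (pow_dvd_pow X (show e + 1 ≤ max (2 * e) 1 by omega)).trans (by simpa using hgr i)
  have : IsAdicComplete ((RingHom.ker π).comap constantCoeff) A⟦X⟧ :=
    isAdicComplete_comap_constantCoeff
  obtain ⟨s, rfl⟩ := exists_sq_eq_of_one_sub_mem (I := (RingHom.ker π).comap constantCoeff)
    (isUnit_iff_constantCoeff.mpr (hπ 2 (by rwa [map_ofNat]))) (u := c) (by simp [hc1])
  obtain ⟨u, rfl⟩ : IsUnit s := (isUnit_pow_iff two_ne_zero).mp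
    (isUnit_iff_constantCoeff.mpr (hπ _ (by rw [hc1]; exact one_ne_zero)))
  refine ⟨↑u⁻¹, r, ?_⟩
  rw [hc]
  linear_combination (-(∑ i, g i ^ 2) * (↑u⁻¹ * ↑u + 1)) * u.inv_mul

end PowerSeries

namespace IterPS

variable (k : Type) [Field k]

theorem isUnit_of_evalZero_ne_zero : ∀ {N : ℕ} {x : IterPS k N}, evalZero k N x ≠ 0 → IsUnit x
  | 0, _, hx => isUnit_iff_ne_zero.mpr hx
  | _ + 1, _, hx => isUnit_iff_constantCoeff.mpr (isUnit_of_evalZero_ne_zero hx)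

instance isAdicComplete_ker_evalZero :
    ∀ N, IsAdicComplete (RingHom.ker (evalZero k N)) (IterPS k N)
  | 0 => (RingHom.injective_iff_ker_eq_bot (evalZero k 0)).mp Function.injective_id ▸
      IsAdicComplete.bot (IterPS k 0)
  | n + 1 =>
    have := isAdicComplete_ker_evalZero n
    RingHom.comap_ker (evalZero k n) constantCoeff ▸ isAdicComplete_comap_constantCoeff

end IterPS

theorem stmt_12_general (k : Type) [Field k] (h2 : (2 : k) ≠ 0) (n : ℕ)
    (f : IterPS k (n + 1))
    (hreg : PowerSeries.map (IterPS.evalZero k n)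
      (show PowerSeries (IterPS k n) from f) ≠ 0)
    (m : ℕ) (hms : (m : ℕ∞) ≤ levelE k)
    (hf : SumOfSquares m f) :
    ∃ (a : IterPS k (n + 1)) (b : Polynomial (IterPS k n)),
      SumOfSquares m b ∧ f = a ^ 2 * polyToPS k n b := by
  obtain ⟨g, rfl⟩ := hf
  obtain ⟨a, r, h⟩ := exists_eq_sq_mul_sum_sq_coe (IterPS.evalZero k n)
    (fun _ => IterPS.isUnit_of_evalZero_ne_zero k) h2 hms g hreg
  refine ⟨a, ∑ i, r i ^ 2, ⟨r, rfl⟩, ?_⟩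
  simp only [map_sum, map_pow]
  exact h

/-- **Statement 12.** Let `f ∈ Rₙ = k[[t₁,…,t_n]]` (here with `n = n' + 1 ≥ 1`, realized
as `R_{n-1}[[t_n]]`) be regular in `t_n`, i.e. `f(0,…,0,t_n) ≠ 0`, and let `1 ≤ m ≤ s(k)`.
If `f` is a sum of `m` squares in `Rₙ`, then `f = a²·b` with `a ∈ Rₙ` and
`b ∈ R_{n−1}[t_n]` a sum of `m` squares in `R_{n−1}[t_n]`. -/
theorem stmt_12 (k : Type) [Field k] (h2 : (2 : k) ≠ 0) (n : ℕ)
    (f : IterPS k (n + 1))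
    (hreg : PowerSeries.map (IterPS.evalZero k n)
      (show PowerSeries (IterPS k n) from f) ≠ 0)
    (m : ℕ) (hm : 1 ≤ m) (hms : (m : ℕ∞) ≤ levelE k)
    (hf : SumOfSquares m f) :
    ∃ (a : IterPS k (n + 1)) (b : Polynomial (IterPS k n)),
      SumOfSquares m b ∧ f = a ^ 2 * polyToPS k n b :=
  stmt_12_general k h2 n f hreg m hms hf

end
end
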